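/- There exists a constant C₃ > 0 such that for every bounded continuous f : ℝ → ℝ with |f(s)| ≤ A for all s, the function L₀⁻¹(f)(s) = tanh(s) ∫₀^s tanh⁻²(s') ∫₀^{s'} tanh(s'') f(s'') ds'' ds' satisfies |L₀⁻¹(f)(s)| ≤ C₃ A s² for all s ∈ ℝ. -/

import Mathlib

/-!
The inner integral is at most `A |s'| |tanh s'|`, because `|tanh|` is monotone in `|s|`.
Dividing by `tanh² s'` and using `|s'| ≤ (1 + |s'|) |tanh s'|` (which amounts to
`1 + 2x ≤ exp (2x)`) bounds the middle integrand by `A (1 + |s|)` on `[0, s]`, so the outer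
integral is at most `A (1 + |s|) |s|`; the prefactor `|tanh s| ≤ min 1 |s|` turns this into `2 A s²`.
-/

open Real

theorem abs_le_abs_of_mem_uIoc_zero {α : Type*} [AddCommGroup α] [LinearOrder α]
    [IsOrderedAddMonoid α] {a t : α} (ht : t ∈ Set.uIoc 0 a) : |t| ≤ |a| := by
  simpa using Set.abs_sub_left_of_mem_uIcc (Set.uIoc_subset_uIcc ht)

namespace Real

theorem tanh_eq_one_sub (x : ℝ) : tanh x = 1 - 2 / (exp (2 * x) + 1) := by
  rw [tanh_eq, two_mul, exp_add, exp_neg]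
  field_simp
  ring

theorem tanh_monotone : Monotone tanh := fun x y hxy => by
  rw [tanh_eq_one_sub, tanh_eq_one_sub]
  gcongr

theorem tanh_nonneg {x : ℝ} (hx : 0 ≤ x) : 0 ≤ tanh x :=
  tanh_zero ▸ tanh_monotone hx

theorem abs_tanh (x : ℝ) : |tanh x| = tanh |x| := by
  rcases le_total 0 x with hx | hx
  · rw [abs_of_nonneg hx, abs_of_nonneg (tanh_nonneg hx)]
  · rw [abs_of_nonpos hx, tanh_neg, abs_of_nonpos (by simpa using tanh_nonneg (neg_nonneg.2 hx))]

theorem abs_tanh_le_abs_tanh {x y : ℝ} (h : |x| ≤ |y|) : |tanh x| ≤ |tanh y| := by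
  rw [abs_tanh, abs_tanh]
  exact tanh_monotone h

theorem abs_sinh_le_abs_mul_cosh (x : ℝ) : |sinh x| ≤ |x| * cosh x := by
  have hsinh : ∫ t in (0 : ℝ)..x, cosh t = sinh x := by
    rw [intervalIntegral.integral_eq_sub_of_hasDerivAt (fun t _ => hasDerivAt_sinh t)
      (continuous_cosh.intervalIntegrable _ _), sinh_zero, sub_zero]
  have hcosh : ∀ t ∈ Set.uIoc 0 x, ‖cosh t‖ ≤ cosh x := fun t ht => by
    rw [norm_eq_abs, abs_of_pos (cosh_pos t), ← cosh_abs t, ← cosh_abs x, cosh_le_cosh,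
      abs_abs, abs_abs]
    exact abs_le_abs_of_mem_uIoc_zero ht
  simpa [hsinh, mul_comm] using intervalIntegral.norm_integral_le_of_norm_le_const hcosh

theorem abs_tanh_le_abs (x : ℝ) : |tanh x| ≤ |x| := by
  rw [tanh_eq_sinh_div_cosh, abs_div, abs_of_pos (cosh_pos x), div_le_iff₀ (cosh_pos x)]
  exact abs_sinh_le_abs_mul_cosh x

theorem div_one_add_le_tanh {x : ℝ} (hx : 0 ≤ x) : x / (1 + x) ≤ tanh x := by
  have h : 2 / (exp (2 * x) + 1) ≤ 1 / (1 + x) := by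
    rw [div_le_div_iff₀ (by positivity) (by positivity)]
    linarith [add_one_le_exp (2 * x)]
  calc x / (1 + x) = 1 - 1 / (1 + x) := by field_simp; ring
    _ ≤ tanh x := by rw [tanh_eq_one_sub]; linarith

theorem abs_le_one_add_abs_mul_abs_tanh (x : ℝ) : |x| ≤ (1 + |x|) * |tanh x| := by
  rw [← div_le_iff₀' (by positivity), abs_tanh]
  exact div_one_add_le_tanh (abs_nonneg x)

end Real

theorem abs_integral_tanh_mul_le {f : ℝ → ℝ} {A : ℝ} (hf : ∀ s, |f s| ≤ A) (t : ℝ) :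
    |∫ s in (0 : ℝ)..t, tanh s * f s| ≤ A * |tanh t| * |t| := by
  have hbound : ∀ s ∈ Set.uIoc 0 t, ‖tanh s * f s‖ ≤ A * |tanh t| := fun s hs => by
    rw [norm_mul, norm_eq_abs, norm_eq_abs, mul_comm A]
    exact mul_le_mul (abs_tanh_le_abs_tanh (abs_le_abs_of_mem_uIoc_zero hs)) (hf s)
      (abs_nonneg _) (abs_nonneg _)
  simpa using intervalIntegral.norm_integral_le_of_norm_le_const hbound

theorem abs_inv_tanh_sq_mul_le {A t y : ℝ} (hA : 0 ≤ A) (hy : |y| ≤ A * |tanh t| * |t|) :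
    |(tanh t ^ 2)⁻¹ * y| ≤ A * (1 + |t|) := by
  rcases eq_or_ne (tanh t) 0 with h | h
  · rw [h, zero_pow two_ne_zero, inv_zero, zero_mul, abs_zero]
    positivity
  have hpos : 0 < |tanh t| := abs_pos.2 h
  calc |(tanh t ^ 2)⁻¹ * y| = |y| / |tanh t| ^ 2 := by
        rw [abs_mul, abs_inv, abs_pow, inv_mul_eq_div]
    _ ≤ A * |tanh t| * |t| / |tanh t| ^ 2 := by gcongr
    _ = A * |t| / |tanh t| := by field_simp
    _ ≤ A * (1 + |t|) := by
        rw [div_le_iff₀ hpos, mul_assoc]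
        exact mul_le_mul_of_nonneg_left (abs_le_one_add_abs_mul_abs_tanh t) hA

theorem L0_inv_bounded :
    ∃ C₃ : ℝ, 0 < C₃ ∧ ∀ (f : ℝ → ℝ) (A : ℝ), Continuous f → (∀ s, |f s| ≤ A) →
      ∀ s : ℝ,
        |tanh s * ∫ s' in (0:ℝ)..s, (tanh s' ^ 2)⁻¹ * ∫ s'' in (0:ℝ)..s', tanh s'' * f s''|
          ≤ C₃ * A * s ^ 2 := by
  refine ⟨2, two_pos, fun f A _ hf s => ?_⟩
  have hA : 0 ≤ A := (abs_nonneg _).trans (hf 0)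
  have hmiddle : ∀ s' ∈ Set.uIoc 0 s,
      ‖(tanh s' ^ 2)⁻¹ * ∫ s'' in (0:ℝ)..s', tanh s'' * f s''‖ ≤ A * (1 + |s|) :=
    fun s' hs' => (abs_inv_tanh_sq_mul_le hA (abs_integral_tanh_mul_le hf s')).trans <|
      mul_le_mul_of_nonneg_left (by linarith [abs_le_abs_of_mem_uIoc_zero hs']) hA
  have houter := intervalIntegral.norm_integral_le_of_norm_le_const hmiddle
  rw [norm_eq_abs, sub_zero] at houter
  have htanh : |tanh s| * |s| ≤ |s| := mul_le_of_le_one_left (abs_nonneg s) (abs_tanh_lt_one s).le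
  have htanh' : |tanh s| * |s| ≤ |s| * |s| :=
    mul_le_mul_of_nonneg_right (abs_tanh_le_abs s) (abs_nonneg s)
  calc _ = |tanh s| * |∫ s' in (0:ℝ)..s, (tanh s' ^ 2)⁻¹ * ∫ s'' in (0:ℝ)..s', tanh s'' * f s''| :=
        abs_mul _ _
    _ ≤ |tanh s| * (A * (1 + |s|) * |s|) := by gcongr
    _ = A * (|tanh s| * |s| + |tanh s| * |s| * |s|) := by ring
    _ ≤ A * (|s| * |s| + |s| * |s|) := by gcongr
    _ = 2 * A * s ^ 2 := by rw [← sq, sq_abs]; ring
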